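/- Let ε, ε', δ be positive reals satisfying 3ε + ε/δ ≤ ε', and let (V₁, V₂, V₃) be an ε-typical (ε, p)-regular triple in which the density d_{ij}p of each pair (Vᵢ, Vⱼ) is at least δp. Then at most 4ε·d_{23}p|V₂||V₃| of the edges between V₂ and V₃ fail to be ε'-good. -/

import Mathlib

open Finset

open scoped Classical

noncomputable section

namespace RandomTriangle

/-- Number of ordered adjacent pairs between `X` and `Y`. -/
def eBtw {V : Type*} (G : SimpleGraph V) (X Y : Finset V) : ℕ :=
  ((X ×ˢ Y).filter fun a => G.Adj a.1 a.2).card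

/-- Edge density between `X` and `Y`. -/
def dens {V : Type*} (G : SimpleGraph V) (X Y : Finset V) : ℝ :=
  (eBtw G X Y : ℝ) / ((X.card : ℝ) * (Y.card : ℝ))

/-- Number of neighbours of `v` in `X`. -/
def degIn {V : Type*} (G : SimpleGraph V) (v : V) (X : Finset V) : ℕ :=
  (X.filter fun w => G.Adj v w).card

/-- Neighbourhood of `v` inside `X`. -/
def nbhdIn {V : Type*} (G : SimpleGraph V) (v : V) (X : Finset V) : Finset V :=
  X.filter fun w => G.Adj v w

/-- Number of common neighbours of `u` and `w` inside `X`. -/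
def codegIn {V : Type*} (G : SimpleGraph V) (u w : V) (X : Finset V) : ℕ :=
  (X.filter fun x => G.Adj u x ∧ G.Adj w x).card

/-- `(ε, p)`-regular pair `(X, Y)`. -/
def RegularPair {V : Type*} (G : SimpleGraph V) (ε p : ℝ) (X Y : Finset V) : Prop :=
  ∀ X' ⊆ X, ∀ Y' ⊆ Y, ε * X.card ≤ (X'.card : ℝ) → ε * Y.card ≤ (Y'.card : ℝ) →
    |dens G X Y - dens G X' Y'| ≤ ε * p

/-- `(ε, p)`-regular triple. -/
def RegularTriple {V : Type*} (G : SimpleGraph V) (ε p : ℝ) (V₁ V₂ V₃ : Finset V) : Prop :=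
  RegularPair G ε p V₁ V₂ ∧ RegularPair G ε p V₁ V₃ ∧ RegularPair G ε p V₂ V₃

/-- `v ∈ V₁` is an `ε`-typical vertex of the triple `(V₁, V₂, V₃)`:
its neighbourhoods in `V₂`, `V₃` have the expected size `(1 ± ε)·d₁ᵢp|Vᵢ|`
(note `d₁ᵢ p = dens G V₁ Vᵢ`), and they contain large subsets forming an
`(ε, p)`-regular pair of density `(1 ± ε)·d₂₃p`. -/
def TypicalVertex {V : Type*} (G : SimpleGraph V) (ε p : ℝ) (V₁ V₂ V₃ : Finset V) (v : V) :
    Prop :=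
  ((1 - ε) * (dens G V₁ V₂ * V₂.card) ≤ ((nbhdIn G v V₂).card : ℝ) ∧
    ((nbhdIn G v V₂).card : ℝ) ≤ (1 + ε) * (dens G V₁ V₂ * V₂.card)) ∧
  ((1 - ε) * (dens G V₁ V₃ * V₃.card) ≤ ((nbhdIn G v V₃).card : ℝ) ∧
    ((nbhdIn G v V₃).card : ℝ) ≤ (1 + ε) * (dens G V₁ V₃ * V₃.card)) ∧
  ∃ N₂' ⊆ nbhdIn G v V₂, ∃ N₃' ⊆ nbhdIn G v V₃,
    (1 - ε) * ((nbhdIn G v V₂).card : ℝ) ≤ (N₂'.card : ℝ) ∧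
    (1 - ε) * ((nbhdIn G v V₃).card : ℝ) ≤ (N₃'.card : ℝ) ∧
    RegularPair G ε p N₂' N₃' ∧
    (1 - ε) * dens G V₂ V₃ ≤ dens G N₂' N₃' ∧
    dens G N₂' N₃' ≤ (1 + ε) * dens G V₂ V₃

/-- An `ε`-typical triple: `(ε,p)`-regular and in each part all but at most an
`ε`-fraction of the vertices are `ε`-typical. -/
def TypicalTriple {V : Type*} (G : SimpleGraph V) (ε p : ℝ) (V₁ V₂ V₃ : Finset V) : Prop :=
  RegularTriple G ε p V₁ V₂ V₃ ∧
  ((V₁.filter fun v => ¬ TypicalVertex G ε p V₁ V₂ V₃ v).card : ℝ) ≤ ε * V₁.card ∧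
  ((V₂.filter fun v => ¬ TypicalVertex G ε p V₂ V₁ V₃ v).card : ℝ) ≤ ε * V₂.card ∧
  ((V₃.filter fun v => ¬ TypicalVertex G ε p V₃ V₁ V₂ v).card : ℝ) ≤ ε * V₃.card

/-- A `(δ, ε, p)`-super-regular triple. -/
def SuperRegularTriple {V : Type*} (G : SimpleGraph V) (δ ε p : ℝ) (V₁ V₂ V₃ : Finset V) :
    Prop :=
  RegularTriple G ε p V₁ V₂ V₃ ∧
  δ * p ≤ dens G V₁ V₂ ∧ δ * p ≤ dens G V₁ V₃ ∧ δ * p ≤ dens G V₂ V₃ ∧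
  (∀ v ∈ V₁, TypicalVertex G ε p V₁ V₂ V₃ v) ∧
  (∀ v ∈ V₂, TypicalVertex G ε p V₂ V₁ V₃ v) ∧
  (∀ v ∈ V₃, TypicalVertex G ε p V₃ V₁ V₂ v)

/-- An edge `(u, w)` with `u ∈ V₂`, `w ∈ V₃` is `ε`-good (w.r.t. `V₁`) if its endpoints
have at least `(1 - ε)·d₁₂d₁₃p²|V₁|` common neighbours in `V₁`
(note `d₁₂d₁₃p² = dens G V₁ V₂ * dens G V₁ V₃`). -/
def GoodEdge {V : Type*} (G : SimpleGraph V) (ε : ℝ) (V₁ V₂ V₃ : Finset V) (u w : V) : Prop :=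
  (1 - ε) * (dens G V₁ V₂ * dens G V₁ V₃ * V₁.card) ≤ (codegIn G u w V₁ : ℝ)

/-- An `ε`-typical vertex `v ∈ V₁` is `ε`-good if the pair of its neighbourhoods in
`V₂`, `V₃` spans at most `ε·d₁₂d₁₃d₂₃p³|V₂||V₃|` edges that are not `ε`-good. -/
def GoodVertex {V : Type*} (G : SimpleGraph V) (ε p : ℝ) (V₁ V₂ V₃ : Finset V) (v : V) :
    Prop :=
  TypicalVertex G ε p V₁ V₂ V₃ v ∧
  ((((nbhdIn G v V₂) ×ˢ (nbhdIn G v V₃)).filter fun uw =>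
      G.Adj uw.1 uw.2 ∧ ¬ GoodEdge G ε V₁ V₂ V₃ uw.1 uw.2).card : ℝ) ≤
    ε * (dens G V₁ V₂ * dens G V₁ V₃ * dens G V₂ V₃ * V₂.card * V₃.card)

/-- A `(δ, ε, p)`-strong-super-regular triple. -/
def StrongSuperRegularTriple {V : Type*} (G : SimpleGraph V) (δ ε p : ℝ)
    (V₁ V₂ V₃ : Finset V) : Prop :=
  SuperRegularTriple G δ ε p V₁ V₂ V₃ ∧
  (∀ v ∈ V₁, GoodVertex G ε p V₁ V₂ V₃ v) ∧
  (∀ v ∈ V₂, GoodVertex G ε p V₂ V₁ V₃ v) ∧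
  (∀ v ∈ V₃, GoodVertex G ε p V₃ V₁ V₂ v)

/-- A triangle packing: a collection of pairwise vertex-disjoint triangles of `G`. -/
def IsTrianglePacking {V : Type*} [DecidableEq V] (G : SimpleGraph V)
    (T : Finset (Finset V)) : Prop :=
  (∀ t ∈ T, t.card = 3 ∧ ∀ x ∈ t, ∀ y ∈ t, x ≠ y → G.Adj x y) ∧
  (∀ s ∈ T, ∀ t ∈ T, s ≠ t → Disjoint s t)

def idx0 {k : ℕ} (t : Fin k) : Fin (3 * k) := ⟨3 * t.1, by have := t.2; omega⟩
def idx1 {k : ℕ} (t : Fin k) : Fin (3 * k) := ⟨3 * t.1 + 1, by have := t.2; omega⟩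
def idx2 {k : ℕ} (t : Fin k) : Fin (3 * k) := ⟨3 * t.1 + 2, by have := t.2; omega⟩

/-- The endpoints of every edge between `A` and `B` have at most `4|C|p²` common
neighbours in `C`. -/
def CodegBound {V : Type*} (G : SimpleGraph V) (p : ℝ) (A B C : Finset V) : Prop :=
  ∀ u ∈ A, ∀ w ∈ B, G.Adj u w → (codegIn G u w C : ℝ) ≤ 4 * C.card * p ^ 2

/-- The probability, in the Erdős–Rényi random graph `G(n, p)`, of the event `A`. -/
def gnpProb (n : ℕ) (p : ℝ) (A : Set (SimpleGraph (Fin n))) : ℝ :=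
  ∑ G ∈ Finset.univ.filter (fun G => G ∈ A),
    p ^ ((Finset.univ.filter fun e : Sym2 (Fin n) => e ∈ G.edgeSet).card) *
      (1 - p) ^ (n.choose 2 - (Finset.univ.filter fun e : Sym2 (Fin n) => e ∈ G.edgeSet).card)

/-- A sequence of graph properties holds asymptotically almost surely in `G(n, p n)`. -/
def AAS (p : ℕ → ℝ) (P : ∀ n : ℕ, SimpleGraph (Fin n) → Prop) : Prop :=
  Filter.Tendsto (fun n => gnpProb n (p n) {G | P n G}) Filter.atTop (nhds 1)

end RandomTriangle

/-!
Fix a typical vertex `u ∈ V₂` with neighbourhoods `N₁ ⊆ V₁`, `N₃ ⊆ V₃` and regular subpair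
`(N₁', N₃')`. By regularity all but `ε|N₃'|` vertices `w ∈ N₃'` have at least
`(d(N₁', N₃') - εp)|N₁'| ≥ ((1 - ε)d₁₃ - ε)p · (1 - ε)²d₁₂p|V₁|` neighbours in `N₁' ⊆ N(u)`,
and `3ε + ε/δ ≤ ε'` makes this at least `(1 - ε')d₁₂d₁₃p²|V₁|`, so `uw` is `ε'`-good; hence
at most `(1 - (1 - ε)²)|N₃|` edges at `u` are bad. Summing over the typical vertices of `V₂`,
which carry at least a `(1 - ε)²` share of the `d₂₃p|V₂||V₃|` edges, and counting every edge
at an atypical vertex as bad, gives at most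
`(1 - (1 - ε)⁴) d₂₃p|V₂||V₃| ≤ 4ε d₂₃p|V₂||V₃|` bad edges.
-/

namespace RandomTriangle

section Counting

variable {V : Type*} (G : SimpleGraph V)

theorem eBtw_comm (X Y : Finset V) : eBtw G X Y = eBtw G Y X := by
  refine Finset.card_bij (fun a _ => a.swap) ?_ (fun a _ b _ h => Prod.swap_injective h) ?_
  · rintro ⟨a, b⟩ h
    simp only [mem_filter, mem_product] at h ⊢
    exact ⟨⟨h.1.2, h.1.1⟩, h.2.symm⟩
  · rintro ⟨a, b⟩ h
    simp only [mem_filter, mem_product] at h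
    exact ⟨(b, a), by simpa [h.1.1, h.1.2] using h.2.symm, rfl⟩

theorem dens_comm (X Y : Finset V) : dens G X Y = dens G Y X := by
  rw [dens, dens, eBtw_comm, mul_comm]

theorem dens_nonneg (X Y : Finset V) : 0 ≤ dens G X Y := by
  unfold dens
  positivity

theorem dens_mul_card_mul_card (X Y : Finset V) :
    dens G X Y * (X.card * Y.card) = eBtw G X Y := by
  rcases eq_or_ne ((X.card : ℝ) * Y.card) 0 with h | h
  · have hXY : X ×ˢ Y = ∅ := by
      rw [← card_eq_zero, card_product]
      exact_mod_cast h
    simp [h, eBtw, hXY]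
  · exact div_mul_cancel₀ _ h

theorem card_filter_adj_and (X Y : Finset V) (P : V → V → Prop) [DecidableRel P] :
    ((X ×ˢ Y).filter fun a => G.Adj a.1 a.2 ∧ P a.1 a.2).card =
      ∑ x ∈ X, ((nbhdIn G x Y).filter (P x)).card := by
  rw [card_filter, sum_product]
  refine sum_congr rfl fun x _ => ?_
  rw [nbhdIn, filter_filter, card_filter]

theorem eBtw_eq_sum_card_nbhdIn (X Y : Finset V) :
    eBtw G X Y = ∑ x ∈ X, (nbhdIn G x Y).card := by
  rw [eBtw, card_filter, sum_product]
  exact sum_congr rfl fun x _ => (card_filter _ _).symm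

theorem card_nbhdIn_le_codegIn {u w : V} {X N : Finset V} (hN : N ⊆ nbhdIn G u X) :
    (nbhdIn G w N).card ≤ codegIn G u w X := by
  refine card_le_card fun x hx => ?_
  obtain ⟨hxN, hwx⟩ := mem_filter.mp hx
  obtain ⟨hxX, hux⟩ := mem_filter.mp (hN hxN)
  exact mem_filter.mpr ⟨hxX, hux, hwx⟩

end Counting

section Regularity

variable {V : Type*} {G : SimpleGraph V} {ε p : ℝ} {X Y : Finset V}

theorem RegularPair.symm (h : RegularPair G ε p X Y) : RegularPair G ε p Y X :=
  fun Y' hY' X' hX' hYc hXc => by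
    simpa only [dens_comm G Y, dens_comm G Y'] using h X' hX' Y' hY' hXc hYc

theorem RegularPair.card_filter_card_nbhdIn_lt_le (h : RegularPair G ε p X Y)
    (hε0 : 0 ≤ ε) (hε1 : ε ≤ 1) :
    ((X.filter fun x => ((nbhdIn G x Y).card : ℝ) < (dens G X Y - ε * p) * Y.card).card : ℝ)
      ≤ ε * X.card := by
  set W := X.filter fun x => ((nbhdIn G x Y).card : ℝ) < (dens G X Y - ε * p) * Y.card
  by_contra! hW
  have hWne : W.Nonempty :=
    card_pos.mp (by exact_mod_cast (by positivity : 0 ≤ ε * X.card).trans_lt hW)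
  have hYc : ε * (Y.card : ℝ) ≤ Y.card := mul_le_of_le_one_left (Nat.cast_nonneg _) hε1
  have hreg := abs_le.mp (h W (filter_subset _ _) Y Subset.rfl hW.le hYc)
  have hsmall : (eBtw G W Y : ℝ) < (dens G X Y - ε * p) * (W.card * Y.card) := by
    rw [eBtw_eq_sum_card_nbhdIn, Nat.cast_sum]
    calc ∑ x ∈ W, ((nbhdIn G x Y).card : ℝ)
        < ∑ _x ∈ W, (dens G X Y - ε * p) * Y.card :=
          sum_lt_sum_of_nonempty hWne fun x hx => (mem_filter.mp hx).2
      _ = (dens G X Y - ε * p) * (W.card * Y.card) := by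
          rw [sum_const, nsmul_eq_mul]
          ring
  rw [← dens_mul_card_mul_card] at hsmall
  have hlow : (dens G X Y - ε * p) * (W.card * Y.card) ≤ dens G W Y * (W.card * Y.card) :=
    mul_le_mul_of_nonneg_right (by linarith) (by positivity)
  linarith

end Regularity

section TypicalVertex

variable {V : Type*} {G : SimpleGraph V} {ε ε' p : ℝ} {V₁ V₂ V₃ : Finset V} {u w : V}

theorem goodEdge_of_one_le (hε' : 1 ≤ ε') : GoodEdge G ε' V₁ V₂ V₃ u w :=
  (mul_nonpos_of_nonpos_of_nonneg (by linarith)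
    (by have := dens_nonneg G V₁ V₂; have := dens_nonneg G V₁ V₃; positivity)).trans
    (Nat.cast_nonneg _)

theorem goodEdge_of_le_card_nbhdIn {N : Finset V} {q : ℝ} (hq : 0 ≤ q)
    (hscalar : (1 - ε') * dens G V₁ V₃ ≤ (1 - ε) ^ 2 * q)
    (hN : N ⊆ nbhdIn G u V₁) (hNc : (1 - ε) ^ 2 * (dens G V₁ V₂ * V₁.card) ≤ N.card)
    (hw : q * N.card ≤ (nbhdIn G w N).card) :
    GoodEdge G ε' V₁ V₂ V₃ u w := by
  have h12 : 0 ≤ dens G V₁ V₂ * V₁.card := mul_nonneg (dens_nonneg G V₁ V₂) (Nat.cast_nonneg _)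
  calc (1 - ε') * (dens G V₁ V₂ * dens G V₁ V₃ * V₁.card)
      = (1 - ε') * dens G V₁ V₃ * (dens G V₁ V₂ * V₁.card) := by ring
    _ ≤ (1 - ε) ^ 2 * q * (dens G V₁ V₂ * V₁.card) := mul_le_mul_of_nonneg_right hscalar h12
    _ = q * ((1 - ε) ^ 2 * (dens G V₁ V₂ * V₁.card)) := by ring
    _ ≤ q * N.card := mul_le_mul_of_nonneg_left hNc hq
    _ ≤ (nbhdIn G w N).card := hw
    _ ≤ codegIn G u w V₁ := by exact_mod_cast card_nbhdIn_le_codegIn G hN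

theorem card_filter_not_goodEdge_le_of_typicalVertex (hε0 : 0 ≤ ε) (hε1 : ε ≤ 1)
    (hq : 0 ≤ (1 - ε) * dens G V₁ V₃ - ε * p)
    (hscalar : (1 - ε') * dens G V₁ V₃ ≤ (1 - ε) ^ 2 * ((1 - ε) * dens G V₁ V₃ - ε * p))
    (hu : TypicalVertex G ε p V₂ V₁ V₃ u) :
    (((nbhdIn G u V₃).filter fun w => ¬ GoodEdge G ε' V₁ V₂ V₃ u w).card : ℝ) ≤
      (1 - (1 - ε) ^ 2) * (nbhdIn G u V₃).card := by
  obtain ⟨⟨hN₁, -⟩, -, N₁', hN₁', N₃', hN₃', hN₁'c, hN₃'c, hreg, hdens, -⟩ := hu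
  have hN₁'c' : (1 - ε) ^ 2 * (dens G V₁ V₂ * V₁.card) ≤ N₁'.card := by
    rw [dens_comm] at hN₁
    nlinarith
  set W := N₃'.filter fun w =>
    ((nbhdIn G w N₁').card : ℝ) < (dens G N₃' N₁' - ε * p) * N₁'.card
  have hW : (W.card : ℝ) ≤ ε * N₃'.card := hreg.symm.card_filter_card_nbhdIn_lt_le hε0 hε1
  have hbad : ((nbhdIn G u V₃).filter fun w => ¬ GoodEdge G ε' V₁ V₂ V₃ u w) ⊆
      (nbhdIn G u V₃ \ N₃') ∪ W := by
    intro w hw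
    obtain ⟨hwN₃, hwbad⟩ := mem_filter.mp hw
    by_cases hwN₃' : w ∈ N₃'
    · refine mem_union_right _ (mem_filter.mpr ⟨hwN₃', ?_⟩)
      by_contra hhigh
      refine hwbad (goodEdge_of_le_card_nbhdIn hq hscalar hN₁' hN₁'c' ?_)
      rw [dens_comm] at hhigh
      exact (mul_le_mul_of_nonneg_right (by linarith) (Nat.cast_nonneg _)).trans (not_lt.mp hhigh)
    · exact mem_union_left _ (mem_sdiff.mpr ⟨hwN₃, hwN₃'⟩)
  have hcount : (((nbhdIn G u V₃).filter fun w => ¬ GoodEdge G ε' V₁ V₂ V₃ u w).card : ℝ) ≤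
      (nbhdIn G u V₃).card - N₃'.card + W.card := by
    have h := (card_le_card hbad).trans (card_union_le _ _)
    rw [card_sdiff_of_subset hN₃'] at h
    have h' : ((nbhdIn G u V₃).card - N₃'.card : ℕ) = ((nbhdIn G u V₃).card : ℝ) - N₃'.card :=
      Nat.cast_sub (card_le_card hN₃')
    rw [← h']
    exact_mod_cast h
  nlinarith

end TypicalVertex

end RandomTriangle

open RandomTriangle

theorem one_sub_mul_le_sq_mul_sub {ε ε' D x : ℝ} (hε0 : 0 ≤ ε) (hε1 : ε ≤ 1) (hD : 0 ≤ D)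
    (hx : 0 ≤ x) (h : x ≤ (ε' - 3 * ε) * D) :
    (1 - ε') * D ≤ (1 - ε) ^ 2 * ((1 - ε) * D - x) := by
  have hx' : (1 - ε) ^ 2 * x ≤ x := mul_le_of_le_one_left hx (by nlinarith)
  nlinarith [mul_nonneg (mul_nonneg (sq_nonneg ε) (by linarith : 0 ≤ 3 - ε)) hD]

theorem sum_le_four_mul_of_card_filter_not_le {ι : Type*} {s : Finset ι} {P : ι → Prop}
    {f g : ι → ℝ} {ε c : ℝ} (hε1 : ε ≤ 1) (hc : 0 ≤ c)
    (hfg : ∀ i ∈ s, f i ≤ g i) (hfP : ∀ i ∈ s, P i → f i ≤ (1 - (1 - ε) ^ 2) * g i)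
    (hgP : ∀ i ∈ s, P i → (1 - ε) * c ≤ g i)
    (hcard : ((s.filter fun i => ¬ P i).card : ℝ) ≤ ε * s.card)
    (hsum : ∑ i ∈ s, g i = c * s.card) :
    ∑ i ∈ s, f i ≤ 4 * ε * (c * s.card) := by
  set A := ∑ i ∈ s.filter P, g i
  set B := ∑ i ∈ s.filter fun i => ¬ P i, g i
  have hAB : A + B = c * s.card := by rw [sum_filter_add_sum_filter_not, hsum]
  have hf : ∑ i ∈ s, f i ≤ (1 - (1 - ε) ^ 2) * A + B := by
    rw [← sum_filter_add_sum_filter_not s P, mul_sum]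
    exact add_le_add (sum_le_sum fun i hi => hfP i (mem_filter.mp hi).1 (mem_filter.mp hi).2)
      (sum_le_sum fun i hi => hfg i (mem_filter.mp hi).1)
  have hPcard : (1 - ε) * s.card ≤ (s.filter P).card := by
    have : ((s.filter P).card : ℝ) + (s.filter fun i => ¬ P i).card = s.card := by
      exact_mod_cast card_filter_add_card_filter_not P
    linarith
  have hA : (1 - ε) ^ 2 * (c * s.card) ≤ A := by
    have h := card_nsmul_le_sum (s.filter P) g ((1 - ε) * c)
      fun i hi => hgP i (mem_filter.mp hi).1 (mem_filter.mp hi).2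
    rw [nsmul_eq_mul] at h
    nlinarith [mul_le_mul_of_nonneg_right hPcard (by nlinarith : 0 ≤ (1 - ε) * c)]
  have hbern : 1 - 4 * ε ≤ (1 - ε) ^ 4 := by
    nlinarith [mul_nonneg (sq_nonneg ε) (add_nonneg (sq_nonneg (ε - 2)) zero_le_two)]
  have hE : 0 ≤ c * s.card := by positivity
  nlinarith [mul_le_mul_of_nonneg_left hA (sq_nonneg (1 - ε))]

theorem stmt_6_general {V : Type*} (G : SimpleGraph V)
    (ε ε' δ p : ℝ) (hε : 0 < ε) (hδ : 0 < δ) (hp : 0 < p)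
    (hcond : 3 * ε + ε / δ ≤ ε')
    (V₁ V₂ V₃ : Finset V) (d₁₃ d₂₃ : ℝ)
    (htyp : TypicalTriple G ε p V₁ V₂ V₃)
    (hd13 : dens G V₁ V₃ = d₁₃ * p)
    (hd23 : dens G V₂ V₃ = d₂₃ * p)
    (hδ13 : δ ≤ d₁₃) :
    ((((V₂ ×ˢ V₃).filter fun uw =>
        G.Adj uw.1 uw.2 ∧ ¬ GoodEdge G ε' V₁ V₂ V₃ uw.1 uw.2).card : ℝ)) ≤
      4 * ε * d₂₃ * p * V₂.card * V₃.card := by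
  have hrhs : 4 * ε * d₂₃ * p * V₂.card * V₃.card =
      4 * ε * (dens G V₂ V₃ * V₃.card * V₂.card) := by
    rw [hd23]; ring
  rw [hrhs, card_filter_adj_and G V₂ V₃ fun u w => ¬ GoodEdge G ε' V₁ V₂ V₃ u w, Nat.cast_sum]
  rcases le_or_gt 1 ε' with hε'1 | hε'1
  · simp only [goodEdge_of_one_le hε'1, not_true_eq_false, filter_false, card_empty,
      Nat.cast_zero, sum_const_zero]
    have := dens_nonneg G V₂ V₃
    positivity
  have hεδ : ε ≤ (ε' - 3 * ε) * δ := (div_le_iff₀ hδ).mp (by linarith)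
  have hε3 : ε < 1 / 3 := by nlinarith [div_pos hε hδ]
  have hD := dens_nonneg G V₁ V₃
  have hεp : ε * p ≤ (ε' - 3 * ε) * dens G V₁ V₃ := by
    rw [hd13]
    nlinarith [mul_le_mul_of_nonneg_left hδ13 (by nlinarith : 0 ≤ (ε' - 3 * ε) * p)]
  have hq : 0 ≤ (1 - ε) * dens G V₁ V₃ - ε * p := by nlinarith
  have hscalar := one_sub_mul_le_sq_mul_sub hε.le (by linarith) hD (by positivity) hεp
  refine sum_le_four_mul_of_card_filter_not_le (by linarith)
    (mul_nonneg (dens_nonneg G V₂ V₃) (Nat.cast_nonneg _))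
    (fun u _ => by exact_mod_cast card_le_card (filter_subset _ _))
    (fun u _ hu => card_filter_not_goodEdge_le_of_typicalVertex hε.le (by linarith) hq hscalar hu)
    (fun u _ hu => hu.2.1.1) htyp.2.2.1 ?_
  rw [← Nat.cast_sum, ← eBtw_eq_sum_card_nbhdIn, ← dens_mul_card_mul_card]
  ring

/-- **Proposition (most edges are good).** In an `ε`-typical `(ε,p)`-regular triple with all
densities `d_{ij}p ≥ δp`, if `3ε + ε/δ ≤ ε'` then at most `4ε·d₂₃p|V₂||V₃|` of the edges
between `V₂` and `V₃` are not `ε'`-good. -/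
theorem stmt_6 {V : Type*} [Fintype V] [DecidableEq V] (G : SimpleGraph V)
    (ε ε' δ p : ℝ) (hε : 0 < ε) (hε'pos : 0 < ε') (hδ : 0 < δ) (hp : 0 < p)
    (hcond : 3 * ε + ε / δ ≤ ε')
    (V₁ V₂ V₃ : Finset V) (d₁₂ d₁₃ d₂₃ : ℝ)
    (h12 : Disjoint V₁ V₂) (h13 : Disjoint V₁ V₃) (h23 : Disjoint V₂ V₃)
    (htyp : TypicalTriple G ε p V₁ V₂ V₃)
    (hd12 : dens G V₁ V₂ = d₁₂ * p) (hd13 : dens G V₁ V₃ = d₁₃ * p)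
    (hd23 : dens G V₂ V₃ = d₂₃ * p)
    (hδ12 : δ ≤ d₁₂) (hδ13 : δ ≤ d₁₃) (hδ23 : δ ≤ d₂₃) :
    ((((V₂ ×ˢ V₃).filter fun uw =>
        G.Adj uw.1 uw.2 ∧ ¬ GoodEdge G ε' V₁ V₂ V₃ uw.1 uw.2).card : ℝ)) ≤
      4 * ε * d₂₃ * p * V₂.card * V₃.card :=
  stmt_6_general G ε ε' δ p hε hδ hp hcond V₁ V₂ V₃ d₁₃ d₂₃ htyp hd13 hd23 hδ13
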